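/- Let s = 2. The functions α(t) = β(t) = (1/4)·√(16 − t), defined for t ∈ [0, 16), form a solution of the system with α(0) = β(0) = 1, and α(t) = β(t) → 0 as t → 16. In particular, the maximal time of existence of the solution with initial value (1, 1) is t_max = 16; the round Berger sphere (ε = 1) shrinks homothetically to a point under the spinor flow. -/

import Mathlib

/-!
On the diagonal `α = β = γ` the vector field is `((s/4 - 17/32)/γ, (3/32 - s/16)/γ)`; for `s = 2`
both components equal `-1/(32γ)`, so the diagonal is invariant and reduces to `(γ²)' = -1/16`,
i.e. `γ(t)² = 1 - t/16`. The solution reaches `β = 0` at `t = 16`, whereas a solution defined at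
`16` would have `β` continuous and nonzero there; hence no extension past `16` exists.
-/

open Real Filter Set Topology
open scoped ENNReal

/-- The vector field of the spinor-flow ODE system on Berger spheres,
with parameter `s = aλ ∈ {2, -2}`. -/
noncomputable def F (s x y : ℝ) : ℝ × ℝ :=
  (-(9/32) * x^3 / y^4 + (s/4) * x^2 / y^3 - (1/4) * x / y^2,
   (3/32) * x^2 / y^3 - (s/16) * x / y^2)

/-- `(α, β)` is a solution of the system on the set `J`, with `β` never zero. -/
def IsSolutionOn (s : ℝ) (α β : ℝ → ℝ) (J : Set ℝ) : Prop :=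
  ∀ t ∈ J, β t ≠ 0 ∧
    HasDerivAt α (F s (α t) (β t)).1 t ∧
    HasDerivAt β (F s (α t) (β t)).2 t
/-- The interval `[0, T)` as a subset of `ℝ`, where `T ∈ (0,∞]`. -/
def domainUpTo (T : ℝ≥0∞) : Set ℝ := {t : ℝ | 0 ≤ t ∧ ENNReal.ofReal t < T}

/-- `(α, β)` is a maximal solution on `[0, T)`: it is a solution there and cannot be
extended to a solution on a strictly larger interval to the right. -/
def IsMaxSolution (s : ℝ) (α β : ℝ → ℝ) (T : ℝ≥0∞) : Prop :=
  0 < T ∧ IsSolutionOn s α β (domainUpTo T) ∧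
    ¬ ∃ (T' : ℝ≥0∞) (α' β' : ℝ → ℝ), T < T' ∧ IsSolutionOn s α' β' (domainUpTo T') ∧
        ∀ t ∈ domainUpTo T, α' t = α t ∧ β' t = β t

/-- The explicit solution for `s = 2`, `ε = 1`: `α(t) = β(t) = (1/4)√(16 - t)`. -/
noncomputable def γex (t : ℝ) : ℝ := (1/4) * Real.sqrt (16 - t)

theorem F_apply_self (s : ℝ) {x : ℝ} (hx : x ≠ 0) :
    F s x x = ((s / 4 - 17 / 32) / x, (3 / 32 - s / 16) / x) := by
  simp only [F, Prod.mk.injEq]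
  constructor
  · field_simp
    ring
  · field_simp

theorem IsSolutionOn.mono {s : ℝ} {α β : ℝ → ℝ} {J J' : Set ℝ} (h : IsSolutionOn s α β J)
    (hJ : J' ⊆ J) : IsSolutionOn s α β J' :=
  fun t ht => h t (hJ ht)

theorem domainUpTo_ofReal (T : ℝ) : domainUpTo (ENNReal.ofReal T) = Ico 0 T := by
  ext t
  simp only [domainUpTo, mem_ofPred_eq, mem_Ico, ENNReal.ofReal_lt_ofReal_iff']
  constructor
  · rintro ⟨ht0, htT, -⟩
    exact ⟨ht0, htT⟩
  · rintro ⟨ht0, htT⟩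
    exact ⟨ht0, htT, ht0.trans_lt htT⟩

/-- A solution is continuous wherever it is defined, so it cannot be extended to a time at
which `β` tends to `0`. -/
theorem isMaxSolution_ofReal_of_tendsto_zero {s T : ℝ} {α β : ℝ → ℝ} (hT : 0 < T)
    (hsol : IsSolutionOn s α β (Ico 0 T)) (hβ : Tendsto β (𝓝[<] T) (𝓝 0)) :
    IsMaxSolution s α β (ENNReal.ofReal T) := by
  refine ⟨ENNReal.ofReal_pos.2 hT, (domainUpTo_ofReal T).symm ▸ hsol, ?_⟩
  rintro ⟨T', α', β', hTT', hsol', hagree⟩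
  obtain ⟨hβ'T, -, hβ'deriv⟩ := hsol' T ⟨hT.le, hTT'⟩
  have heq : β' =ᶠ[𝓝[<] T] β := by
    filter_upwards [Ioo_mem_nhdsLT hT] with t ht
    exact (hagree t ((domainUpTo_ofReal T).symm ▸ Ioo_subset_Ico_self ht)).2
  have hβ'lim : Tendsto β' (𝓝[<] T) (𝓝 (β' T)) :=
    hβ'deriv.continuousAt.tendsto.mono_left nhdsWithin_le_nhds
  exact hβ'T (tendsto_nhds_unique hβ'lim (hβ.congr' heq.symm))

theorem γex_pos {t : ℝ} (ht : t < 16) : 0 < γex t := by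
  unfold γex
  have := Real.sqrt_pos.2 (sub_pos.2 ht)
  positivity

theorem γex_zero : γex 0 = 1 := by
  rw [γex, sub_zero, show (16 : ℝ) = 4 ^ 2 by norm_num, Real.sqrt_sq (by norm_num)]
  norm_num

theorem hasDerivAt_γex {t : ℝ} (ht : t < 16) : HasDerivAt γex (-(1 / 32) / γex t) t := by
  have hsqrt : HasDerivAt (fun t => Real.sqrt (16 - t)) (1 / (2 * Real.sqrt (16 - t)) * (-1)) t :=
    (Real.hasDerivAt_sqrt (sub_pos.2 ht).ne').comp t ((hasDerivAt_id' t).const_sub 16)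
  have hγ : γex t = (1 / 4) * Real.sqrt (16 - t) := rfl
  have hval : (1 / 4) * (1 / (2 * Real.sqrt (16 - t)) * (-1)) = -(1 / 32) / γex t := by
    have := (γex_pos ht).ne'
    rw [hγ] at this ⊢
    field_simp
    ring
  exact hval ▸ hsqrt.const_mul (1 / 4)

theorem isSolutionOn_γex : IsSolutionOn 2 γex γex (Iio 16) := by
  intro t ht
  have hF : F 2 (γex t) (γex t) = (-(1 / 32) / γex t, -(1 / 32) / γex t) := by
    rw [F_apply_self 2 (γex_pos ht).ne']
    norm_num
  rw [hF]
  exact ⟨(γex_pos ht).ne', hasDerivAt_γex ht, hasDerivAt_γex ht⟩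

theorem tendsto_γex_nhdsLT : Tendsto γex (𝓝[<] 16) (𝓝 0) := by
  have hcont : Continuous γex := by unfold γex; fun_prop
  have h16 : γex 16 = 0 := by simp [γex]
  simpa [h16] using (hcont.tendsto 16).mono_left nhdsWithin_le_nhds

/-- For `s = 2`, the functions `α(t) = β(t) = (1/4)√(16 - t)` form a solution on
`[0, 16)` with `α(0) = β(0) = 1`, tending to `0` as `t → 16⁻`; it is a maximal
solution with `t_max = 16` (the round sphere shrinks homothetically to a point). -/
theorem explicit_solution_eps_one :
    IsSolutionOn 2 γex γex (Set.Ico 0 16) ∧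
    γex 0 = 1 ∧
    Tendsto γex (𝓝[<] 16) (𝓝 0) ∧
    IsMaxSolution 2 γex γex (ENNReal.ofReal 16) := by
  have hsol : IsSolutionOn 2 γex γex (Ico 0 16) := isSolutionOn_γex.mono Ico_subset_Iio_self
  exact ⟨hsol, γex_zero, tendsto_γex_nhdsLT,
    isMaxSolution_ofReal_of_tendsto_zero (by norm_num) hsol tendsto_γex_nhdsLT⟩
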